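/- arXiv:2212.03910 — 4 statements merged into one kernel-verified Lean document; each statement's English description precedes it below -/
import Mathlib

section
/- Let f : ℝ → ℝ be Lebesgue integrable. If liminf as t → 0⁺ of t^(−1/2) ∬_{ℝ×ℝ} p_t(x,y) |f(x) − f(y)| dx dy is finite, then there exists a function g : ℝ → ℝ with g = f Lebesgue-a.e. such that g has bounded pointwise variation on ℝ, i.e. sup over all finite increasing sequences x₀ < x₁ < … < x_k of Σᵢ |g(xᵢ) − g(xᵢ₋₁)| is finite. -/
/-!
Write `ω(h) = ∫ |f (x + h) - f x| dx`. Substituting `y = x + h`, the heat functional at time `t`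
equals `t^(-1/2) ∫ p_t(0, h) ω(h) dh`, and `p_t(0, h) ≥ e⁻¹ (4πt)^(-1/2)` for `h ∈ [√t, 2√t]`;
so a bound `C` on the functional along `t → 0⁺` yields `h → 0⁺` with `ω(h) ≤ e √(4π) C h`.
For such `h` the averages `h⁻¹ ∫_x^{x+h} f` have variation at most `e √(4π) C` and converge to
`f` a.e. (Lebesgue differentiation). By lower semicontinuity of the variation, `f` has bounded
variation on a set of full measure, and writing it there as a difference of bounded monotone
functions extends it to a function of bounded variation on all of `ℝ`.
-/

open MeasureTheory Real Filter Topology Set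
open scoped ENNReal

section Variation

variable {α E : Type*} [LinearOrder α]

theorem eVariationOn_sub_le [SeminormedAddCommGroup E] (f g : α → E) (s : Set α) :
    eVariationOn (f - g) s ≤ eVariationOn f s + eVariationOn g s := by
  refine iSup_le fun ⟨n, u, hu, us⟩ => ?_
  calc ∑ i ∈ Finset.range n, edist ((f - g) (u (i + 1))) ((f - g) (u i))
      ≤ ∑ i ∈ Finset.range n,
          (edist (f (u (i + 1))) (f (u i)) + edist (g (u (i + 1))) (g (u i))) := by
        gcongr with i
        simp only [Pi.sub_apply, edist_dist, ← ENNReal.ofReal_add dist_nonneg dist_nonneg]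
        exact ENNReal.ofReal_le_ofReal (dist_sub_sub_le _ _ _ _)
    _ ≤ eVariationOn f s + eVariationOn g s := by
        rw [Finset.sum_add_distrib]
        exact add_le_add (eVariationOn.sum_le hu us) (eVariationOn.sum_le hu us)

theorem eVariationOn_le_of_tendsto [PseudoEMetricSpace E] {ι : Type*} {p : Filter ι} [p.NeBot]
    {F : ι → α → E} {f : α → E} {s : Set α} {L : ℝ≥0∞}
    (hF : ∀ x ∈ s, Tendsto (fun i => F i x) p (𝓝 (f x)))
    (hL : ∀ᶠ i in p, eVariationOn (F i) s ≤ L) : eVariationOn f s ≤ L := by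
  by_contra! hlt
  obtain ⟨i, hi, hiL⟩ := ((eVariationOn.lowerSemicontinuous_aux hF hlt).and hL).exists
  exact hi.not_ge hiL

theorem MonotoneOn.exists_monotone_extension_abs_le {f : α → ℝ} {s : Set α} {C : ℝ}
    (hf : MonotoneOn f s) (hC₀ : 0 ≤ C) (hC : ∀ x ∈ s, |f x| ≤ C) :
    ∃ g : α → ℝ, Monotone g ∧ (∀ x, |g x| ≤ C) ∧ EqOn f g s := by
  obtain ⟨g, hg, hfg⟩ := hf.exists_monotone_extension
    ⟨-C, by rintro _ ⟨x, hx, rfl⟩; exact (abs_le.1 (hC x hx)).1⟩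
    ⟨C, by rintro _ ⟨x, hx, rfl⟩; exact (abs_le.1 (hC x hx)).2⟩
  refine ⟨fun x => max (-C) (min C (g x)),
    fun x y hxy => max_le_max le_rfl (min_le_min le_rfl (hg hxy)),
    fun x => abs_le.2 ⟨le_max_left _ _, max_le (by linarith) (min_le_left _ _)⟩, fun x hx => ?_⟩
  dsimp only
  rw [← hfg hx, min_eq_right (abs_le.1 (hC x hx)).2, max_eq_right (abs_le.1 (hC x hx)).1]

theorem abs_variationOnFromTo_le {f : α → ℝ} {s : Set α} (hf : BoundedVariationOn f s) (a b : α) :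
    |variationOnFromTo f s a b| ≤ (eVariationOn f s).toReal := by
  rcases le_total a b with hab | hba
  · rw [variationOnFromTo.eq_of_le f s hab, abs_of_nonneg ENNReal.toReal_nonneg]
    exact ENNReal.toReal_mono hf (eVariationOn.mono f inter_subset_left)
  · rw [variationOnFromTo.eq_of_ge f s hba, abs_neg, abs_of_nonneg ENNReal.toReal_nonneg]
    exact ENNReal.toReal_mono hf (eVariationOn.mono f inter_subset_left)

theorem BoundedVariationOn.exists_boundedVariationOn_univ_eqOn {f : α → ℝ} {s : Set α}
    (hf : BoundedVariationOn f s) : ∃ g : α → ℝ, BoundedVariationOn g univ ∧ EqOn g f s := by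
  rcases s.eq_empty_or_nonempty with rfl | ⟨c, hc⟩
  · exact ⟨0, (monotone_const.monotoneOn _).boundedVariationOn (C := 0) (by simp), by simp⟩
  obtain ⟨p, q, hp, hq, rfl, hpq⟩ := hf.locallyBoundedVariationOn.exists_monotoneOn_sub_monotoneOn'
  set V := (eVariationOn (p - q) s).toReal
  have hosc : ∀ x ∈ s, |p x - p c| ≤ V ∧ |q x - q c| ≤ V := by
    intro x hx
    have hV := abs_le.1 ((hpq c hc x hx).symm ▸ abs_variationOnFromTo_le hf c x)
    rcases le_total c x with hcx | hxc
    · have := sub_nonneg.2 (hp hc hx hcx); have := sub_nonneg.2 (hq hc hx hcx)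
      constructor <;> rw [abs_le] <;> constructor <;> linarith
    · have := sub_nonneg.2 (hp hx hc hxc); have := sub_nonneg.2 (hq hx hc hxc)
      constructor <;> rw [abs_le] <;> constructor <;> linarith
  have hV₀ : 0 ≤ V := ENNReal.toReal_nonneg
  obtain ⟨P, hPm, hPC, hPp⟩ := hp.exists_monotone_extension_abs_le (C := |p c| + V) (by positivity)
    fun x hx => by have := (hosc x hx).1; have := abs_sub_abs_le_abs_sub (p x) (p c); linarith
  obtain ⟨Q, hQm, hQC, hQq⟩ := hq.exists_monotone_extension_abs_le (C := |q c| + V) (by positivity)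
    fun x hx => by have := (hosc x hx).2; have := abs_sub_abs_le_abs_sub (q x) (q c); linarith
  refine ⟨P - Q, ?_, fun x hx => by simp [hPp hx, hQq hx]⟩
  have hP := (hPm.monotoneOn univ).boundedVariationOn fun x _ => hPC x
  have hQ := (hQm.monotoneOn univ).boundedVariationOn fun x _ => hQC x
  exact ((eVariationOn_sub_le P Q univ).trans_lt (ENNReal.add_lt_top.2 ⟨hP.lt_top, hQ.lt_top⟩)).ne

end Variation

theorem eVariationOn_le_lintegral {μ : Measure ℝ} {g : ℝ → ℝ} {φ : ℝ → ℝ≥0∞} {s : Set ℝ}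
    (hg : ∀ a ∈ s, ∀ b ∈ s, a ≤ b → edist (g b) (g a) ≤ ∫⁻ x in Ioc a b, φ x ∂μ) :
    eVariationOn g s ≤ ∫⁻ x, φ x ∂μ := by
  refine iSup_le fun ⟨n, u, hu, us⟩ => ?_
  have hsum : ∀ m : ℕ, ∑ i ∈ Finset.range m, edist (g (u (i + 1))) (g (u i))
      ≤ ∫⁻ x in Ioc (u 0) (u m), φ x ∂μ := by
    intro m
    induction m with
    | zero => simp
    | succ m ih =>
      rw [Finset.sum_range_succ, ← Ioc_union_Ioc_eq_Ioc (hu (Nat.zero_le m)) (hu m.le_succ),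
        lintegral_union measurableSet_Ioc (Ioc_disjoint_Ioc_of_le le_rfl)]
      exact add_le_add ih (hg _ (us m) _ (us (m + 1)) (hu m.le_succ))
  exact (hsum n).trans (setLIntegral_le_lintegral _ _)

noncomputable def intervalAverage (f : ℝ → ℝ) (h x : ℝ) : ℝ :=
  h⁻¹ * ∫ y in x..x + h, f y

noncomputable def l1ShiftDist (f : ℝ → ℝ) (h : ℝ) : ℝ≥0∞ :=
  ∫⁻ x, ENNReal.ofReal |f (x + h) - f x|

section IntervalAverage

variable {f : ℝ → ℝ} {h : ℝ}

theorem MeasureTheory.LocallyIntegrable.intervalIntegrable (hf : LocallyIntegrable f) (a b : ℝ) :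
    IntervalIntegrable f volume a b :=
  (hf.integrableOn_isCompact isCompact_uIcc).intervalIntegrable

theorem MeasureTheory.LocallyIntegrable.intervalIntegrable_comp_add_right (hf : LocallyIntegrable f)
    (c a b : ℝ) : IntervalIntegrable (fun x => f (x + c)) volume a b := by
  simpa using (hf.intervalIntegrable (a + c) (b + c)).comp_add_right c

theorem intervalAverage_sub_intervalAverage (hf : LocallyIntegrable f) (a b : ℝ) :
    intervalAverage f h b - intervalAverage f h a = h⁻¹ * ∫ y in a..b, (f (y + h) - f y) := by
  rw [intervalAverage, intervalAverage, ← mul_sub,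
    intervalIntegral.integral_interval_sub_interval_comm' (hf.intervalIntegrable _ _)
      (hf.intervalIntegrable _ _) (hf.intervalIntegrable _ _),
    intervalIntegral.integral_sub (hf.intervalIntegrable_comp_add_right h _ _)
      (hf.intervalIntegrable _ _),
    intervalIntegral.integral_comp_add_right]

theorem eVariationOn_intervalAverage_le (hf : LocallyIntegrable f) (hh : 0 < h) :
    eVariationOn (intervalAverage f h) univ ≤ ENNReal.ofReal h⁻¹ * l1ShiftDist f h := by
  rw [l1ShiftDist, ← lintegral_const_mul' _ _ ENNReal.ofReal_ne_top]
  refine eVariationOn_le_lintegral fun a _ b _ hab => ?_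
  have hint : IntegrableOn (fun y => |f (y + h) - f y|) (Ioc a b) :=
    ((hf.intervalIntegrable_comp_add_right h a b).sub (hf.intervalIntegrable a b)).abs.1
  rw [lintegral_const_mul' _ _ ENNReal.ofReal_ne_top,
    ← ofReal_integral_eq_lintegral_ofReal hint (ae_of_all _ fun _ => abs_nonneg _),
    ← ENNReal.ofReal_mul (by positivity), edist_dist, Real.dist_eq,
    intervalAverage_sub_intervalAverage hf, abs_mul, abs_of_pos (inv_pos.2 hh),
    ← intervalIntegral.integral_of_le hab]
  gcongr
  exact intervalIntegral.abs_integral_le_integral_abs hab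

theorem ae_tendsto_intervalAverage (hf : LocallyIntegrable f) :
    ∀ᵐ x, Tendsto (fun h => intervalAverage f h x) (𝓝[>] 0) (𝓝 (f x)) := by
  filter_upwards [LocallyIntegrable.ae_hasDerivAt_integral hf] with x hx
  refine ((hx 0).tendsto_slope_zero_right).congr fun h => ?_
  rw [intervalAverage, smul_eq_mul, intervalIntegral.integral_interval_sub_left
    (hf.intervalIntegrable _ _) (hf.intervalIntegrable _ _)]

end IntervalAverage

theorem exists_ae_eq_boundedVariationOn_of_l1ShiftDist_le {f : ℝ → ℝ} (hf : LocallyIntegrable f)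
    {ι : Type*} {l : Filter ι} [l.NeBot] {h : ι → ℝ} (hh : Tendsto h l (𝓝[>] 0))
    {L : ℝ≥0∞} (hL : L ≠ ⊤) (hω : ∀ i, l1ShiftDist f (h i) ≤ L * ENNReal.ofReal (h i)) :
    ∃ g : ℝ → ℝ, g =ᵐ[volume] f ∧ BoundedVariationOn g univ := by
  set S := {x | Tendsto (fun i => intervalAverage f (h i) x) l (𝓝 (f x))}
  have hS : ∀ᵐ x, x ∈ S := (ae_tendsto_intervalAverage hf).mono fun x hx => hx.comp hh
  have hvar : ∀ᶠ i in l, eVariationOn (intervalAverage f (h i)) S ≤ L := by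
    filter_upwards [hh.eventually self_mem_nhdsWithin] with i (hi : 0 < h i)
    calc eVariationOn (intervalAverage f (h i)) S
        ≤ eVariationOn (intervalAverage f (h i)) univ := eVariationOn.mono _ (subset_univ S)
      _ ≤ ENNReal.ofReal (h i)⁻¹ * (L * ENNReal.ofReal (h i)) :=
        (eVariationOn_intervalAverage_le hf hi).trans (by gcongr; exact hω i)
      _ = L := by
        rw [mul_left_comm, ← ENNReal.ofReal_mul (inv_nonneg.2 hi.le), inv_mul_cancel₀ hi.ne',
          ENNReal.ofReal_one, mul_one]
  obtain ⟨g, hg, hgf⟩ := BoundedVariationOn.exists_boundedVariationOn_univ_eqOn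
    ((eVariationOn_le_of_tendsto (fun x hx => hx) hvar).trans_lt hL.lt_top).ne
  exact ⟨g, hS.mono fun x hx => hgf hx, hg⟩

noncomputable def heatKernel (t x y : ℝ) : ℝ :=
  (4 * Real.pi * t) ^ (-(1 : ℝ) / 2) * Real.exp (-(x - y) ^ 2 / (4 * t))

noncomputable def heatFunctional (f : ℝ → ℝ) (t : ℝ) : ℝ≥0∞ :=
  ENNReal.ofReal (t ^ (-(1 : ℝ) / 2)) *
    ∫⁻ x : ℝ, ∫⁻ y : ℝ, ENNReal.ofReal (heatKernel t x y * |f x - f y|)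

theorem heatKernel_add_right (t x h : ℝ) : heatKernel t x (x + h) = heatKernel t 0 h := by
  simp only [heatKernel, sub_add_cancel_left, zero_sub]

theorem exp_neg_one_mul_le_heatKernel {t h : ℝ} (ht : 0 < t) (hh : h ^ 2 ≤ 4 * t) :
    rexp (-1) * (4 * π * t) ^ (-(1 : ℝ) / 2) ≤ heatKernel t 0 h := by
  rw [heatKernel, mul_comm]
  gcongr
  rw [zero_sub, neg_sq, neg_div, neg_le_neg_iff, div_le_one (by positivity)]
  exact hh

theorem lintegral_lintegral_heatKernel {f : ℝ → ℝ} (hf : AEStronglyMeasurable f) (t : ℝ) :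
    ∫⁻ x, ∫⁻ y, ENNReal.ofReal (heatKernel t x y * |f x - f y|)
      = ∫⁻ h, ENNReal.ofReal (heatKernel t 0 h) * l1ShiftDist f h := by
  have hmeas : AEMeasurable (fun p : ℝ × ℝ =>
      ENNReal.ofReal (heatKernel t 0 p.2) * ENNReal.ofReal |f (p.1 + p.2) - f p.1|)
      (volume.prod volume) := by
    refine (Measurable.ennreal_ofReal (by unfold heatKernel; fun_prop)).aemeasurable.mul ?_
    exact ((hf.comp_quasiMeasurePreserving (quasiMeasurePreserving_add volume volume)).sub
      hf.comp_fst).aemeasurable.abs.ennreal_ofReal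
  calc ∫⁻ x, ∫⁻ y, ENNReal.ofReal (heatKernel t x y * |f x - f y|)
      = ∫⁻ x, ∫⁻ h, ENNReal.ofReal (heatKernel t 0 h) * ENNReal.ofReal |f (x + h) - f x| := by
        refine lintegral_congr fun x => ?_
        rw [← lintegral_add_left_eq_self _ x]
        simp_rw [heatKernel_add_right, abs_sub_comm (f x), ENNReal.ofReal_mul' (abs_nonneg _)]
    _ = ∫⁻ h, ENNReal.ofReal (heatKernel t 0 h) * l1ShiftDist f h := by
        rw [lintegral_lintegral_swap hmeas]
        simp_rw [l1ShiftDist, lintegral_const_mul' _ _ ENNReal.ofReal_ne_top]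

theorem le_heatFunctional {f : ℝ → ℝ} (hf : AEStronglyMeasurable f) {t : ℝ} (ht : 0 < t)
    {B : ℝ≥0∞} (hB : ∀ h ∈ Icc (√t) (2 * √t),
      ENNReal.ofReal (rexp 1 * √(4 * π) * √t) * B ≤ l1ShiftDist f h) :
    B ≤ heatFunctional f t := by
  have hsqrt : ∀ u : ℝ, 0 < u → u ^ (-(1 : ℝ) / 2) = (√u)⁻¹ := fun u hu => by
    rw [sqrt_eq_rpow, ← rpow_neg hu.le]; norm_num
  have hone : t ^ (-(1 : ℝ) / 2) * ((rexp (-1) * (4 * π * t) ^ (-(1 : ℝ) / 2)) *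
      (rexp 1 * √(4 * π) * √t) * √t) = 1 := by
    rw [hsqrt t ht, hsqrt _ (by positivity), sqrt_mul (by positivity), exp_neg]
    field_simp
  calc B = ENNReal.ofReal (t ^ (-(1 : ℝ) / 2) * ((rexp (-1) * (4 * π * t) ^ (-(1 : ℝ) / 2)) *
        (rexp 1 * √(4 * π) * √t) * √t)) * B := by rw [hone, ENNReal.ofReal_one, one_mul]
    _ = ENNReal.ofReal (t ^ (-(1 : ℝ) / 2)) *
        (ENNReal.ofReal (rexp (-1) * (4 * π * t) ^ (-(1 : ℝ) / 2)) *
          (ENNReal.ofReal (rexp 1 * √(4 * π) * √t) * B) * ENNReal.ofReal √t) := by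
        rw [ENNReal.ofReal_mul (by positivity), ENNReal.ofReal_mul (by positivity),
          ENNReal.ofReal_mul (by positivity)]
        ring
    _ = ENNReal.ofReal (t ^ (-(1 : ℝ) / 2)) * ∫⁻ _ in Icc (√t) (2 * √t),
          ENNReal.ofReal (rexp (-1) * (4 * π * t) ^ (-(1 : ℝ) / 2)) *
            (ENNReal.ofReal (rexp 1 * √(4 * π) * √t) * B) := by
        rw [setLIntegral_const, volume_Icc, two_mul, add_sub_cancel_right]
    _ ≤ ENNReal.ofReal (t ^ (-(1 : ℝ) / 2)) *
        ∫⁻ h, ENNReal.ofReal (heatKernel t 0 h) * l1ShiftDist f h := by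
        refine mul_le_mul_right ((setLIntegral_mono' measurableSet_Icc fun h hh => ?_).trans
          (setLIntegral_le_lintegral _ _)) _
        refine mul_le_mul' (ENNReal.ofReal_le_ofReal (exp_neg_one_mul_le_heatKernel ht ?_))
          (hB h hh)
        have := sq_sqrt ht.le
        nlinarith [hh.1, hh.2, sqrt_nonneg t]
    _ = heatFunctional f t := by rw [heatFunctional, lintegral_lintegral_heatKernel hf]

theorem exists_l1ShiftDist_le_of_heatFunctional_lt {f : ℝ → ℝ} (hf : AEStronglyMeasurable f)
    {t : ℝ} (ht : 0 < t) {C : ℝ≥0∞} (hC : heatFunctional f t < C) :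
    ∃ h ∈ Icc (√t) (2 * √t),
      l1ShiftDist f h ≤ ENNReal.ofReal (rexp 1 * √(4 * π)) * C * ENNReal.ofReal h := by
  by_contra! hlt
  refine hC.not_ge (le_heatFunctional hf ht fun h hh => (le_of_lt ?_))
  refine lt_of_le_of_lt ?_ (hlt h hh)
  rw [ENNReal.ofReal_mul (by positivity), mul_right_comm]
  gcongr
  exact hh.1

/-- Finiteness of the liminf of the heat-kernel nonlocal functional forces membership in BV
(one-dimensional case): there is an a.e. representative of bounded pointwise variation. -/
theorem stmt_3 (f : ℝ → ℝ) (hint : Integrable f)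
    (h : Filter.liminf (fun t : ℝ =>
          ENNReal.ofReal (t ^ (-(1 : ℝ) / 2)) *
            ∫⁻ x : ℝ, ∫⁻ y : ℝ, ENNReal.ofReal (heatKernel t x y * |f x - f y|))
        (nhdsWithin 0 (Set.Ioi 0)) < ⊤) :
    ∃ g : ℝ → ℝ, g =ᵐ[volume] f ∧ BoundedVariationOn g Set.univ := by
  obtain ⟨C, hlt, hC⟩ := exists_between h
  obtain ⟨t, ht, htC⟩ := exists_seq_forall_of_frequently
    ((frequently_lt_of_liminf_lt (by isBoundedDefault) hlt).and_eventually self_mem_nhdsWithin)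
  choose r hr hω using fun n =>
    exists_l1ShiftDist_le_of_heatFunctional_lt hint.aestronglyMeasurable (htC n).2 (htC n).1
  refine exists_ae_eq_boundedVariationOn_of_l1ShiftDist_le hint.locallyIntegrable (l := atTop) ?_
    (by finiteness) hω
  have hsqrt : Tendsto (fun n => √(t n)) atTop (𝓝 0) := by
    rw [← sqrt_zero]
    exact (continuous_sqrt.tendsto 0).comp (tendsto_nhdsWithin_iff.1 ht).1
  refine tendsto_nhdsWithin_iff.2 ⟨squeeze_zero (fun n => (sqrt_nonneg _).trans (hr n).1)
    (fun n => (hr n).2) (by simpa using hsqrt.const_mul 2), Eventually.of_forall fun n => ?_⟩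
  exact (sqrt_pos.2 (htC n).2).trans_le (hr n).1
end

section
/- Let a < b be real numbers. Then the limit as t → 0⁺ of t^(−1/2) ∬_{ℝ×ℝ} p_t(x,y) |χ_{(a,b)}(x) − χ_{(a,b)}(y)| dx dy exists and equals 4/√π, where χ_{(a,b)} denotes the characteristic function of the open interval (a,b). -/
/-!
Since the heat kernel depends only on `x - y`, Fubini and the substitution `y = x - u` turn the
double integral into `∫ p_t(u, 0) · |(a, b) ∆ ((a, b) + u)| du`, and an interval of length `L`
and its translate by `u` have symmetric difference of measure `2 min(|u|, L)`. With `B = 1/(4t)`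
the normalised functional equals `4/√π · B ∫ e^{-Bu²} min(|u|, L) du`. Bounding `min(|u|, L)`
above by `|u|` and below by `|u| 𝟙_{|u| ≤ L}` squeezes `B ∫ e^{-Bu²} min(|u|, L) du` between
`1 - e^{-BL²}` and `1`, so it tends to `1` as `t → 0⁺`.
-/

open MeasureTheory Real Filter

open Set
open scoped symmDiff

theorem integral_abs_indicator_one_sub_indicator_one {α : Type*} [MeasurableSpace α]
    (μ : Measure α) {s t : Set α} (hs : MeasurableSet s) (ht : MeasurableSet t) :
    ∫ x, |s.indicator 1 x - t.indicator 1 x| ∂μ = μ.real (s ∆ t) := by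
  simp_rw [← apply_indicator_symmDiff abs_neg, ← integral_indicator_one (hs.symmDiff ht)]
  congr with x
  exact abs_of_nonneg (indicator_nonneg (fun _ _ => zero_le_one) x)

theorem volume_real_symmDiff_Ioo_add (a b u : ℝ) (hab : a ≤ b) :
    volume.real (Ioo a b ∆ Ioo (a + u) (b + u)) = 2 * min |u| (b - a) := by
  have hfin (c d : ℝ) : volume (Ioo c d) ≠ ⊤ := measure_Ioo_lt_top.ne
  have hinter : MeasurableSet (Ioo a b ∩ Ioo (a + u) (b + u)) :=
    measurableSet_Ioo.inter measurableSet_Ioo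
  rw [measureReal_symmDiff_eq measurableSet_Ioo measurableSet_Ioo (hfin _ _) (hfin _ _),
    ← sdiff_self_inter, measureReal_sdiff inter_subset_left hinter (hfin _ _),
    ← sdiff_self_inter, inter_comm (Ioo (a + u) _),
    measureReal_sdiff inter_subset_right hinter (hfin _ _),
    Ioo_inter_Ioo, volume_real_Ioo, volume_real_Ioo, volume_real_Ioo]
  rw [max_eq_left (sub_nonneg.2 hab), max_eq_left (by linarith : 0 ≤ b + u - (a + u))]
  grind

theorem integral_abs_indicator_Ioo_sub_comp_sub (a b u : ℝ) (hab : a ≤ b) :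
    ∫ x, |(Ioo a b).indicator 1 x - (Ioo a b).indicator (1 : ℝ → ℝ) (x - u)| =
      2 * min |u| (b - a) := by
  have hshift (x : ℝ) :
      (Ioo a b).indicator (1 : ℝ → ℝ) (x - u) = (Ioo (a + u) (b + u)).indicator 1 x := by
    rw [← preimage_sub_const_Ioo, ← indicator_comp_right]; rfl
  simp_rw [hshift]
  rw [integral_abs_indicator_one_sub_indicator_one _ measurableSet_Ioo measurableSet_Ioo,
    volume_real_symmDiff_Ioo_add a b u hab]

section Translation

variable {G : Type*} [AddCommGroup G] [MeasurableSpace G] [MeasurableAdd₂ G] [MeasurableNeg G]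
  {μ : Measure G} [SFinite μ] [μ.IsAddLeftInvariant]

theorem integrable_mul_abs_sub_comp_sub {k f : G → ℝ} (hk : Integrable k μ)
    (hf : Integrable f μ) :
    Integrable (fun p : G × G => k p.2 * |f p.1 - f (p.1 - p.2)|) (μ.prod μ) := by
  have hdom : Integrable (fun p : G × G => |f p.1| * |k p.2| + |k p.2| * |f (p.1 - p.2)|)
      (μ.prod μ) :=
    (hf.abs.mul_prod hk.abs).add
      (hk.abs.convolution_integrand (ContinuousLinearMap.mul ℝ ℝ) hf.abs)
  have hmeas : AEStronglyMeasurable (fun p : G × G => k p.2 * |f p.1 - f (p.1 - p.2)|)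
      (μ.prod μ) :=
    hk.aestronglyMeasurable.comp_snd.mul <| continuous_abs.comp_aestronglyMeasurable <|
      hf.aestronglyMeasurable.comp_fst.sub <| hf.aestronglyMeasurable.comp_quasiMeasurePreserving
        (quasiMeasurePreserving_sub_of_right_invariant μ μ)
  refine hdom.mono' hmeas (ae_of_all _ fun p => ?_)
  rw [norm_mul, Real.norm_eq_abs, Real.norm_eq_abs, abs_abs]
  nlinarith [abs_sub (f p.1) (f (p.1 - p.2)), abs_nonneg (k p.2)]

theorem integral_integral_mul_abs_sub [μ.IsNegInvariant] {k f : G → ℝ} (hk : Integrable k μ)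
    (hf : Integrable f μ) :
    ∫ x, ∫ y, k (x - y) * |f x - f y| ∂μ ∂μ =
      ∫ u, k u * ∫ x, |f x - f (x - u)| ∂μ ∂μ := by
  calc ∫ x, ∫ y, k (x - y) * |f x - f y| ∂μ ∂μ
      = ∫ x, ∫ u, k u * |f x - f (x - u)| ∂μ ∂μ := by
        congr with x
        rw [← integral_sub_left_eq_self _ μ x]
        simp only [sub_sub_cancel]
    _ = ∫ u, ∫ x, k u * |f x - f (x - u)| ∂μ ∂μ :=
        integral_integral_swap (integrable_mul_abs_sub_comp_sub hk hf)
    _ = ∫ u, k u * ∫ x, |f x - f (x - u)| ∂μ ∂μ := by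
        simp only [integral_const_mul]

end Translation

theorem hasDerivAt_exp_neg_mul_sq_div {B : ℝ} (hB : B ≠ 0) (x : ℝ) :
    HasDerivAt (fun s => exp (-B * s ^ 2) / (-2 * B)) (x * exp (-B * x ^ 2)) x :=
  (((hasDerivAt_pow 2 x).const_mul (-B)).exp.div_const (-2 * B)).congr_deriv (by field)

theorem integral_mul_exp_neg_mul_sq {B : ℝ} (hB : 0 < B) :
    ∫ s in Ioi 0, s * exp (-B * s ^ 2) = (2 * B)⁻¹ := by
  have := integral_mul_cexp_neg_mul_sq (b := (B : ℂ)) (by simpa using hB)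
  apply Complex.ofReal_injective
  rw [← integral_complex_ofReal]
  push_cast
  exact this

theorem intervalIntegral.integral_mul_exp_neg_mul_sq {B : ℝ} (hB : B ≠ 0) (L : ℝ) :
    ∫ s in (0)..L, s * exp (-B * s ^ 2) = (1 - exp (-B * L ^ 2)) / (2 * B) := by
  rw [integral_eq_sub_of_hasDerivAt (fun x _ => hasDerivAt_exp_neg_mul_sq_div hB x)
    ((by fun_prop : Continuous _).intervalIntegrable _ _)]
  simp only [zero_pow two_ne_zero, mul_zero, exp_zero]
  field

theorem integrableOn_Ioi_exp_neg_mul_sq_mul_min {B L : ℝ} (hB : 0 < B) (hL : 0 ≤ L) :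
    IntegrableOn (fun s => exp (-B * s ^ 2) * min s L) (Ioi 0) := by
  refine (integrable_mul_exp_neg_mul_sq hB).integrableOn.mono'
    (by fun_prop : Continuous _).aestronglyMeasurable.restrict ?_
  rw [ae_restrict_iff' measurableSet_Ioi]
  refine ae_of_all _ fun s (hs : 0 < s) => ?_
  rw [norm_mul, Real.norm_of_nonneg (exp_pos _).le, Real.norm_of_nonneg (le_min hs.le hL), mul_comm]
  gcongr
  exact min_le_left s L

theorem setIntegral_Ioi_exp_neg_mul_sq_mul_min_le {B L : ℝ} (hB : 0 < B) (hL : 0 ≤ L) :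
    ∫ s in Ioi 0, exp (-B * s ^ 2) * min s L ≤ (2 * B)⁻¹ := by
  rw [← integral_mul_exp_neg_mul_sq hB]
  refine setIntegral_mono_on (integrableOn_Ioi_exp_neg_mul_sq_mul_min hB hL)
    (integrable_mul_exp_neg_mul_sq hB).integrableOn measurableSet_Ioi fun s _ => ?_
  rw [mul_comm s]
  gcongr
  exact min_le_left s L

theorem le_setIntegral_Ioi_exp_neg_mul_sq_mul_min {B L : ℝ} (hB : 0 < B) (hL : 0 ≤ L) :
    (1 - exp (-B * L ^ 2)) / (2 * B) ≤ ∫ s in Ioi 0, exp (-B * s ^ 2) * min s L := by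
  calc (1 - exp (-B * L ^ 2)) / (2 * B)
      = ∫ s in Ioc 0 L, exp (-B * s ^ 2) * min s L := by
        rw [← intervalIntegral.integral_mul_exp_neg_mul_sq hB.ne',
          intervalIntegral.integral_of_le hL]
        refine setIntegral_congr_fun measurableSet_Ioc fun s hs => ?_
        rw [min_eq_left hs.2, mul_comm]
    _ ≤ ∫ s in Ioi 0, exp (-B * s ^ 2) * min s L := by
        refine setIntegral_mono_set (integrableOn_Ioi_exp_neg_mul_sq_mul_min hB hL) ?_
          Ioc_subset_Ioi_self.eventuallyLE
        rw [EventuallyLE, ae_restrict_iff' measurableSet_Ioi]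
        exact ae_of_all _ fun s (hs : 0 < s) => mul_nonneg (exp_pos _).le (le_min hs.le hL)

theorem tendsto_mul_integral_exp_neg_mul_sq_mul_min_abs {L : ℝ} (hL : 0 < L) :
    Tendsto (fun B => B * ∫ u, exp (-B * u ^ 2) * min |u| L) atTop (nhds 1) := by
  have hhalf (B : ℝ) : ∫ u, exp (-B * u ^ 2) * min |u| L =
      2 * ∫ s in Ioi 0, exp (-B * s ^ 2) * min s L := by
    rw [← integral_comp_abs (f := fun s => exp (-B * s ^ 2) * min s L)]
    simp only [sq_abs]
  have hexp : Tendsto (fun B => exp (-B * L ^ 2)) atTop (nhds 0) :=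
    tendsto_exp_atBot.comp (tendsto_neg_atTop_atBot.atBot_mul_const (pow_pos hL 2))
  have hlower : Tendsto (fun B => 1 - exp (-B * L ^ 2)) atTop (nhds 1) := by
    simpa using tendsto_const_nhds.sub hexp
  refine tendsto_of_tendsto_of_tendsto_of_le_of_le' hlower tendsto_const_nhds ?_ ?_
  · filter_upwards [eventually_gt_atTop 0] with B hB
    rw [hhalf]
    calc 1 - exp (-B * L ^ 2) = B * (2 * ((1 - exp (-B * L ^ 2)) / (2 * B))) := by field
      _ ≤ _ := by gcongr; exact le_setIntegral_Ioi_exp_neg_mul_sq_mul_min hB hL.le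
  · filter_upwards [eventually_gt_atTop 0] with B hB
    rw [hhalf]
    calc _ ≤ B * (2 * (2 * B)⁻¹) := by
          gcongr; exact setIntegral_Ioi_exp_neg_mul_sq_mul_min_le hB hL.le
      _ = 1 := by field

theorem heatKernel_eq (t x y : ℝ) :
    heatKernel t x y = (4 * π * t) ^ (-(1 : ℝ) / 2) * exp (-(4 * t)⁻¹ * (x - y) ^ 2) := by
  rw [heatKernel]
  ring_nf

theorem rpow_neg_half_mul_rpow_neg_half {t : ℝ} (ht : 0 < t) :
    t ^ (-(1 : ℝ) / 2) * (4 * π * t) ^ (-(1 : ℝ) / 2) = (2 * √π * t)⁻¹ := by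
  have hsq : t * (4 * π * t) = (2 * √π * t) ^ 2 := by
    rw [mul_pow, mul_pow, sq_sqrt pi_pos.le]; ring
  rw [← mul_rpow ht.le (by positivity), hsq, ← rpow_natCast, ← rpow_mul (by positivity)]
  norm_num [rpow_neg_one]

theorem rpow_neg_half_mul_integral_heatKernel_mul_abs_indicator_Ioo {a b t : ℝ} (hab : a ≤ b)
    (ht : 0 < t) :
    t ^ (-(1 : ℝ) / 2) * ∫ x, ∫ y, heatKernel t x y *
        |(Ioo a b).indicator 1 x - (Ioo a b).indicator (1 : ℝ → ℝ) y| =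
      4 / √π * ((4 * t)⁻¹ * ∫ u, exp (-(4 * t)⁻¹ * u ^ 2) * min |u| (b - a)) := by
  set c := (4 * π * t) ^ (-(1 : ℝ) / 2)
  have hk : Integrable (fun u => c * exp (-(4 * t)⁻¹ * u ^ 2)) :=
    (integrable_exp_neg_mul_sq (by positivity)).const_mul c
  have hχ : Integrable ((Ioo a b).indicator (1 : ℝ → ℝ)) :=
    (integrable_indicator_iff measurableSet_Ioo).2 (integrableOn_const measure_Ioo_lt_top.ne)
  simp_rw [heatKernel_eq]
  rw [integral_integral_mul_abs_sub hk hχ]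
  simp_rw [integral_abs_indicator_Ioo_sub_comp_sub a b _ hab]
  have hassoc (u : ℝ) : c * exp (-(4 * t)⁻¹ * u ^ 2) * (2 * min |u| (b - a)) =
      2 * c * (exp (-(4 * t)⁻¹ * u ^ 2) * min |u| (b - a)) := by ring
  simp_rw [hassoc, integral_const_mul, ← mul_assoc]
  rw [mul_right_comm _ (2 : ℝ) c, rpow_neg_half_mul_rpow_neg_half ht]
  field

/-- The heat-kernel nonlocal functional of the characteristic function of an interval
converges to `4/√π` (perimeter of an interval is `2`). -/
theorem stmt_4 (a b : ℝ) (hab : a < b) :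
    Tendsto (fun t : ℝ => t ^ (-(1 : ℝ) / 2) *
        ∫ x : ℝ, ∫ y : ℝ, heatKernel t x y *
          |Set.indicator (Set.Ioo a b) (fun _ => (1 : ℝ)) x -
            Set.indicator (Set.Ioo a b) (fun _ => (1 : ℝ)) y|)
      (nhdsWithin 0 (Set.Ioi 0)) (nhds (4 / Real.sqrt Real.pi)) := by
  have hB : Tendsto (fun t : ℝ => (4 * t)⁻¹) (nhdsWithin 0 (Ioi 0)) atTop :=
    (tendsto_inv_nhdsGT_zero.const_mul_atTop (by norm_num : (0 : ℝ) < 4⁻¹)).congr fun t =>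
      (mul_inv 4 t).symm
  have hlim := ((tendsto_mul_integral_exp_neg_mul_sq_mul_min_abs (sub_pos.2 hab)).comp
    hB).const_mul (4 / √π)
  rw [mul_one] at hlim
  refine hlim.congr' ?_
  filter_upwards [self_mem_nhdsWithin] with t ht
  exact (rpow_neg_half_mul_integral_heatKernel_mul_abs_indicator_Ioo hab.le ht).symm
end

section
/- Let a < b be real numbers. Then the limit as t → 0⁺ of t^(−1/2) ∫_a^b (1 − ∫_a^b p_t(x,y) dy) dx exists and equals 2/√π. -/
/-!
Write `k` for the centred Gaussian density of variance `2t`, so that `heatKernel t x y = k(x - y)`,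
`T(s) = ∫_s^∞ k` for its tail and `L = b - a`. Since `k` is even with mass one, the inner integrand
`1 - ∫_a^b k(x - y) dy` equals `T(x - a) + T(b - x)`, and an integration by parts gives
`∫_a^b (1 - ∫_a^b k(x - y) dy) dx = 2 (L T(L) + ∫_0^L u k(u) du)`.
Now `u k(u) = -(2t k)'(u)`, so `∫_0^L u k(u) du = 2t (k(0) - k(L))` and
`0 ≤ L T(L) ≤ ∫_L^∞ u k(u) du = 2t k(L)`. After multiplication by `t^(-1/2)` the resulting bounds
are `2/√π (1 - exp(-L²/4t))` and `2/√π`, which squeeze the limit.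
-/

open MeasureTheory Real Filter

open Set ProbabilityTheory intervalIntegral
open scoped NNReal Topology

section EvenKernel

variable {k : ℝ → ℝ}

theorem hasDerivAt_integral_Ioi (hk : Continuous k) (hki : Integrable k) (s : ℝ) :
    HasDerivAt (fun s ↦ ∫ u in Ioi s, k u) (-k s) s := by
  have htail : (fun s ↦ ∫ u in Ioi s, k u) = fun s ↦ (∫ u in Ioi 0, k u) - ∫ u in 0..s, k u := by
    funext s
    rw [← integral_Ioi_sub_Ioi' hki.integrableOn hki.integrableOn, sub_sub_cancel]
  rw [htail]
  exact ((integral_hasDerivAt_right (hk.intervalIntegrable _ _)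
    (hk.stronglyMeasurableAtFilter _ _) hk.continuousAt).const_sub _)

theorem one_sub_intervalIntegral_eq_integral_Ioi_add_integral_Ioi (hki : Integrable k)
    (heven : ∀ u, k (-u) = k u) (hmass : ∫ u, k u = 1) (c d : ℝ) :
    1 - ∫ u in c..d, k u = (∫ u in Ioi d, k u) + ∫ u in Ioi (-c), k u := by
  have hd := integral_Iic_add_Ioi (b := d) hki.integrableOn hki.integrableOn
  have hc : ∫ u in Iic c, k u = ∫ u in Ioi (-c), k u := by
    simpa only [heven] using integral_comp_neg_Iic c k
  rw [← integral_Iic_sub_Iic hki.integrableOn hki.integrableOn, ← hc]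
  linarith

theorem integral_one_sub_integral_comp_sub (hk : Continuous k) (hki : Integrable k)
    (heven : ∀ u, k (-u) = k u) (hmass : ∫ u, k u = 1) (a b : ℝ) :
    ∫ x in a..b, (1 - ∫ y in a..b, k (x - y))
      = 2 * ((b - a) * (∫ u in Ioi (b - a), k u) + ∫ u in 0..(b - a), u * k u) := by
  set T : ℝ → ℝ := fun s ↦ ∫ u in Ioi s, k u
  have hT : ∀ s, HasDerivAt T (-k s) s := hasDerivAt_integral_Ioi hk hki
  have hTc : Continuous T := continuous_iff_continuousAt.2 fun s ↦ (hT s).continuousAt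
  have hsplit : ∀ x, 1 - ∫ y in a..b, k (x - y) = T (x - a) + T (b - x) := fun x ↦ by
    rw [integral_comp_sub_left,
      one_sub_intervalIntegral_eq_integral_Ioi_add_integral_Ioi hki heven hmass, neg_sub]
  have hparts : ∫ s in 0..(b - a), T s * 1 = T (b - a) * (b - a) - T 0 * 0
      - ∫ s in 0..(b - a), -k s * s :=
    integral_mul_deriv_eq_deriv_mul (fun s _ ↦ hT s) (fun s _ ↦ hasDerivAt_id s)
      (hk.neg.intervalIntegrable _ _) intervalIntegrable_const
  simp only [hsplit]
  rw [integral_add ((by fun_prop : Continuous fun x ↦ T (x - a)).intervalIntegrable _ _)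
    ((by fun_prop : Continuous fun x ↦ T (b - x)).intervalIntegrable _ _),
    integral_comp_sub_right T, integral_comp_sub_left T]
  simp only [mul_one, mul_zero, neg_mul, intervalIntegral.integral_neg, mul_comm (k _)] at hparts
  simp only [sub_self, hparts, T]
  ring

theorem mul_integral_Ioi_le_integral_Ioi_mul (hki : Integrable k) (hk0 : ∀ u, 0 ≤ k u) (L : ℝ)
    (hmom : IntegrableOn (fun u ↦ u * k u) (Ioi L)) :
    L * ∫ u in Ioi L, k u ≤ ∫ u in Ioi L, u * k u := by
  rw [← MeasureTheory.integral_const_mul]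
  exact setIntegral_mono_on (hki.integrableOn.const_mul L) hmom measurableSet_Ioi
    fun u hu ↦ mul_le_mul_of_nonneg_right hu.out.le (hk0 u)

end EvenKernel

section Gaussian

theorem continuous_gaussianPDFReal (μ : ℝ) (v : ℝ≥0) : Continuous (gaussianPDFReal μ v) := by
  rw [gaussianPDFReal_def]
  fun_prop

theorem gaussianPDFReal_zero_neg (v : ℝ≥0) (x : ℝ) :
    gaussianPDFReal 0 v (-x) = gaussianPDFReal 0 v x := by
  simp [gaussianPDFReal]

theorem hasDerivAt_gaussianPDFReal (μ : ℝ) (v : ℝ≥0) (x : ℝ) :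
    HasDerivAt (gaussianPDFReal μ v) (-((x - μ) / v) * gaussianPDFReal μ v x) x := by
  have hexponent : HasDerivAt (fun x ↦ -(x - μ) ^ 2 / (2 * v)) (-((x - μ) / v)) x := by
    refine ((((hasDerivAt_id x).sub_const μ).pow 2).neg.div_const (2 * (v : ℝ))).congr_deriv ?_
    simp only [id, Nat.cast_ofNat, mul_one]
    ring
  rw [gaussianPDFReal_def]
  exact ((hexponent.exp).const_mul (√(2 * π * v))⁻¹).congr_deriv (by ring)

theorem tendsto_gaussianPDFReal_atTop (μ : ℝ) (v : ℝ≥0) :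
    Tendsto (gaussianPDFReal μ v) atTop (𝓝 0) := by
  rcases eq_or_ne v 0 with rfl | hv
  · rw [gaussianPDFReal_zero_var]
    exact tendsto_const_nhds
  have hexponent : Tendsto (fun x ↦ -(x - μ) ^ 2 / (2 * v)) atTop atBot := by
    simp only [neg_div]
    exact tendsto_neg_atTop_atBot.comp <| ((tendsto_pow_atTop two_ne_zero).comp
      (tendsto_atTop_add_const_right _ (-μ) tendsto_id)).atTop_div_const (by positivity)
  rw [gaussianPDFReal_def]
  simpa only [Function.comp_apply, mul_zero] using
    (tendsto_exp_atBot.comp hexponent).const_mul (√(2 * π * v))⁻¹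

variable {v : ℝ≥0}

theorem hasDerivAt_neg_mul_gaussianPDFReal (hv : v ≠ 0) (x : ℝ) :
    HasDerivAt (fun u ↦ -(v * gaussianPDFReal 0 v u)) (x * gaussianPDFReal 0 v x) x := by
  refine ((hasDerivAt_gaussianPDFReal 0 v x).const_mul (v : ℝ)).neg.congr_deriv ?_
  have : (v : ℝ) ≠ 0 := by exact_mod_cast hv
  field_simp
  ring

theorem intervalIntegral_mul_gaussianPDFReal (hv : v ≠ 0) (L : ℝ) :
    ∫ u in 0..L, u * gaussianPDFReal 0 v u = v * (gaussianPDFReal 0 v 0 - gaussianPDFReal 0 v L) := by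
  rw [integral_eq_sub_of_hasDerivAt (fun x _ ↦ hasDerivAt_neg_mul_gaussianPDFReal hv x)
    ((continuous_id.mul (continuous_gaussianPDFReal 0 v)).intervalIntegrable _ _)]
  ring

theorem tendsto_neg_mul_gaussianPDFReal_atTop :
    Tendsto (fun u ↦ -(v * gaussianPDFReal 0 v u)) atTop (𝓝 0) := by
  simpa using ((tendsto_gaussianPDFReal_atTop 0 v).const_mul (v : ℝ)).neg

theorem integrableOn_Ioi_mul_gaussianPDFReal (hv : v ≠ 0) {L : ℝ} (hL : 0 ≤ L) :
    IntegrableOn (fun u ↦ u * gaussianPDFReal 0 v u) (Ioi L) :=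
  integrableOn_Ioi_deriv_of_nonneg' (fun x _ ↦ hasDerivAt_neg_mul_gaussianPDFReal hv x)
    (fun x hx ↦ mul_nonneg (hL.trans hx.out.le) (gaussianPDFReal_nonneg 0 v x))
    tendsto_neg_mul_gaussianPDFReal_atTop

theorem integral_Ioi_mul_gaussianPDFReal (hv : v ≠ 0) {L : ℝ} (hL : 0 ≤ L) :
    ∫ u in Ioi L, u * gaussianPDFReal 0 v u = v * gaussianPDFReal 0 v L := by
  rw [integral_Ioi_of_hasDerivAt_of_nonneg' (fun x _ ↦ hasDerivAt_neg_mul_gaussianPDFReal hv x)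
    (fun x hx ↦ mul_nonneg (hL.trans hx.out.le) (gaussianPDFReal_nonneg 0 v x))
    tendsto_neg_mul_gaussianPDFReal_atTop]
  ring

theorem integral_one_sub_integral_gaussianPDFReal_mem_Icc (hv : v ≠ 0) {a b : ℝ} (hab : a ≤ b) :
    ∫ x in a..b, (1 - ∫ y in a..b, gaussianPDFReal 0 v (x - y)) ∈
      Icc (2 * v * (gaussianPDFReal 0 v 0 - gaussianPDFReal 0 v (b - a)))
        (2 * v * gaussianPDFReal 0 v 0) := by
  have hL : 0 ≤ b - a := sub_nonneg.2 hab
  have hki := integrable_gaussianPDFReal 0 v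
  rw [integral_one_sub_integral_comp_sub (continuous_gaussianPDFReal 0 v) hki
    (gaussianPDFReal_zero_neg v) (integral_gaussianPDFReal_eq_one 0 hv),
    intervalIntegral_mul_gaussianPDFReal hv]
  have htail_nonneg : 0 ≤ ∫ u in Ioi (b - a), gaussianPDFReal 0 v u :=
    setIntegral_nonneg measurableSet_Ioi fun u _ ↦ gaussianPDFReal_nonneg 0 v u
  have htail_le := mul_integral_Ioi_le_integral_Ioi_mul hki (gaussianPDFReal_nonneg 0 v) (b - a)
    (integrableOn_Ioi_mul_gaussianPDFReal hv hL)
  rw [integral_Ioi_mul_gaussianPDFReal hv hL] at htail_le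
  constructor <;> nlinarith [mul_nonneg hL htail_nonneg]

end Gaussian

theorem heatKernel_eq_gaussianPDFReal {t : ℝ} (ht : 0 ≤ t) (x y : ℝ) :
    heatKernel t x y = gaussianPDFReal 0 (2 * t).toNNReal (x - y) := by
  rw [heatKernel, gaussianPDFReal, Real.coe_toNNReal _ (by positivity), sub_zero, neg_div,
    rpow_neg (by positivity), ← Real.sqrt_eq_rpow]
  ring_nf

theorem rpow_neg_half_mul_gaussianPDFReal {t : ℝ} (ht : 0 < t) (x : ℝ) :
    t ^ (-(1 : ℝ) / 2) * (2 * (2 * t) * gaussianPDFReal 0 (2 * t).toNNReal x)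
      = 2 / √π * exp (-x ^ 2 / (4 * t)) := by
  have hsqrt : √(2 * π * (2 * t)) = 2 * √π * √t := by
    rw [show 2 * π * (2 * t) = 2 ^ 2 * π * t by ring, sqrt_mul (by positivity),
      sqrt_mul (by positivity), sqrt_sq zero_le_two]
  rw [gaussianPDFReal, Real.coe_toNNReal _ (by positivity), hsqrt, sub_zero, neg_div,
    rpow_neg ht.le, ← Real.sqrt_eq_rpow]
  have : 0 < √t := sqrt_pos.2 ht
  field_simp
  rw [sq_sqrt ht.le]
  ring_nf

theorem rpow_neg_half_mul_integral_one_sub_integral_heatKernel_mem_Icc {t : ℝ} (ht : 0 < t)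
    {a b : ℝ} (hab : a ≤ b) :
    t ^ (-(1 : ℝ) / 2) * ∫ x in a..b, (1 - ∫ y in a..b, heatKernel t x y) ∈
      Icc (2 / √π * (1 - exp (-(b - a) ^ 2 / (4 * t)))) (2 / √π) := by
  have hv : (2 * t).toNNReal ≠ 0 := by simpa using ht
  obtain ⟨hlower, hupper⟩ := integral_one_sub_integral_gaussianPDFReal_mem_Icc hv hab
  have hscale := rpow_neg_half_mul_gaussianPDFReal ht
  have hscale_zero : t ^ (-(1 : ℝ) / 2) * (2 * (2 * t) * gaussianPDFReal 0 (2 * t).toNNReal 0)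
      = 2 / √π := by simpa using hscale 0
  have hpos : 0 < t ^ (-(1 : ℝ) / 2) := rpow_pos_of_pos ht _
  rw [Real.coe_toNNReal _ (by positivity)] at hlower hupper
  simp only [heatKernel_eq_gaussianPDFReal ht.le]
  constructor
  · calc 2 / √π * (1 - exp (-(b - a) ^ 2 / (4 * t)))
        = t ^ (-(1 : ℝ) / 2) * (2 * (2 * t) * (gaussianPDFReal 0 (2 * t).toNNReal 0
            - gaussianPDFReal 0 (2 * t).toNNReal (b - a))) := by
          linear_combination hscale (b - a) - hscale_zero
      _ ≤ _ := mul_le_mul_of_nonneg_left hlower hpos.le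
  · calc _ ≤ t ^ (-(1 : ℝ) / 2) * (2 * (2 * t) * gaussianPDFReal 0 (2 * t).toNNReal 0) :=
          mul_le_mul_of_nonneg_left hupper hpos.le
      _ = 2 / √π := hscale_zero

/-- `lim t^{-1/2} ∫ (χ_E − h_t χ_E) χ_E = (1/√π)|Dχ_E|` for `E = (a,b)` in `ℝ`. -/
theorem stmt_5 (a b : ℝ) (hab : a < b) :
    Tendsto (fun t : ℝ => t ^ (-(1 : ℝ) / 2) *
        ∫ x in a..b, (1 - ∫ y in a..b, heatKernel t x y))
      (nhdsWithin 0 (Set.Ioi 0)) (nhds (2 / Real.sqrt Real.pi)) := by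
  have hdecay : Tendsto (fun t ↦ exp (-(b - a) ^ 2 / (4 * t))) (𝓝[>] 0) (𝓝 0) := by
    have hexponent : Tendsto (fun t ↦ -((b - a) ^ 2 / 4) * t⁻¹) (𝓝[>] 0) atBot :=
      tendsto_inv_nhdsGT_zero.const_mul_atTop_of_neg (by nlinarith)
    refine (tendsto_exp_atBot.comp hexponent).congr fun t ↦ ?_
    rw [Function.comp_apply]
    congr 1
    ring
  have hlower : Tendsto (fun t ↦ 2 / √π * (1 - exp (-(b - a) ^ 2 / (4 * t)))) (𝓝[>] 0)
      (𝓝 (2 / √π)) := by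
    simpa using ((tendsto_const_nhds (x := (1 : ℝ))).sub hdecay).const_mul (2 / √π)
  refine tendsto_of_tendsto_of_tendsto_of_le_of_le' hlower tendsto_const_nhds ?_ ?_ <;>
    filter_upwards [self_mem_nhdsWithin] with t ht
  exacts [(rpow_neg_half_mul_integral_one_sub_integral_heatKernel_mem_Icc ht hab.le).1,
    (rpow_neg_half_mul_integral_one_sub_integral_heatKernel_mem_Icc ht hab.le).2]
end

section
/- Let a < b < c be real numbers. Then the limit as t → 0⁺ of t^(−1/2) ∫_b^c ∫_a^b p_t(x,y) dy dx exists and equals 1/√π. -/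
/-!
Write `g(u) = exp (-u² / 4t)`, `Φ` for its primitive vanishing at `0` and
`Ψ(z) = z Φ(z) + 2t g(z)` for the second primitive. Two applications of the fundamental theorem of
calculus give `∫_b^c ∫_a^b g(x - y) dy dx = Ψ(0) + (Ψ(d₁ + d₂) - Ψ(d₁) - Ψ(d₂))` with `d₁ = b - a`,
`d₂ = c - b`. The main term `Ψ(0) = 2t`, multiplied by `t^(-1/2) (4πt)^(-1/2)`, is exactly `1/√π`;
the defect is `O(e^{-m²/4t})` with `m = min d₁ d₂`, so it is `o(t)`.
-/

open MeasureTheory Real Filter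

open Set intervalIntegral Topology

noncomputable def gaussianProfile (t u : ℝ) : ℝ := exp (-u ^ 2 / (4 * t))

noncomputable def gaussianPrimitive (t z : ℝ) : ℝ := ∫ u in (0 : ℝ)..z, gaussianProfile t u

noncomputable def gaussianSecondPrimitive (t z : ℝ) : ℝ :=
  z * gaussianPrimitive t z + 2 * t * gaussianProfile t z

section

variable {t : ℝ}

theorem continuous_gaussianProfile (t : ℝ) : Continuous (gaussianProfile t) := by
  unfold gaussianProfile; fun_prop

theorem gaussianProfile_nonneg (t u : ℝ) : 0 ≤ gaussianProfile t u := (exp_pos _).le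

theorem gaussianProfile_zero (t : ℝ) : gaussianProfile t 0 = 1 := by
  simp [gaussianProfile]

theorem gaussianProfile_le_of_le (ht : 0 ≤ t) {p u : ℝ} (hp : 0 ≤ p) (hpu : p ≤ u) :
    gaussianProfile t u ≤ gaussianProfile t p :=
  exp_le_exp.2 <| div_le_div_of_nonneg_right (by nlinarith) (by positivity)

theorem hasDerivAt_gaussianProfile (ht : t ≠ 0) (z : ℝ) :
    HasDerivAt (gaussianProfile t) (gaussianProfile t z * -(z / (2 * t))) z := by
  have hexponent : HasDerivAt (fun u : ℝ => -u ^ 2 / (4 * t)) (-(z / (2 * t))) z :=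
    ((hasDerivAt_pow 2 z).neg.div_const (4 * t)).congr_deriv (by field_simp; ring)
  exact hexponent.exp

theorem hasDerivAt_gaussianPrimitive (t z : ℝ) :
    HasDerivAt (gaussianPrimitive t) (gaussianProfile t z) z :=
  integral_hasDerivAt_right ((continuous_gaussianProfile t).intervalIntegrable _ _)
    ((continuous_gaussianProfile t).stronglyMeasurableAtFilter _ _)
    (continuous_gaussianProfile t).continuousAt

theorem hasDerivAt_gaussianSecondPrimitive (ht : t ≠ 0) (z : ℝ) :
    HasDerivAt (gaussianSecondPrimitive t) (gaussianPrimitive t z) z :=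
  (((hasDerivAt_id z).mul (hasDerivAt_gaussianPrimitive t z)).add
    ((hasDerivAt_gaussianProfile ht z).const_mul (2 * t))).congr_deriv
    (by simp only [id]; field_simp; ring)

@[fun_prop]
theorem continuous_gaussianPrimitive (t : ℝ) : Continuous (gaussianPrimitive t) :=
  continuous_iff_continuousAt.2 fun z => (hasDerivAt_gaussianPrimitive t z).continuousAt

theorem gaussianPrimitive_sub_gaussianPrimitive (t p q : ℝ) :
    gaussianPrimitive t q - gaussianPrimitive t p = ∫ u in p..q, gaussianProfile t u :=
  integral_interval_sub_left ((continuous_gaussianProfile t).intervalIntegrable _ _)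
    ((continuous_gaussianProfile t).intervalIntegrable _ _)

theorem integral_gaussianProfile_sub (t x a b : ℝ) :
    ∫ y in a..b, gaussianProfile t (x - y) =
      gaussianPrimitive t (x - a) - gaussianPrimitive t (x - b) := by
  rw [integral_comp_sub_left, gaussianPrimitive_sub_gaussianPrimitive]

theorem integral_integral_gaussianProfile_sub (ht : t ≠ 0) (a b c : ℝ) :
    ∫ x in b..c, ∫ y in a..b, gaussianProfile t (x - y) =
      2 * t + (gaussianSecondPrimitive t ((b - a) + (c - b)) - gaussianSecondPrimitive t (b - a)
        - gaussianSecondPrimitive t (c - b)) := by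
  have hderiv : ∀ x ∈ uIcc b c, HasDerivAt
      (fun x => gaussianSecondPrimitive t (x - a) - gaussianSecondPrimitive t (x - b))
      (∫ y in a..b, gaussianProfile t (x - y)) x := fun x _ => by
    rw [integral_gaussianProfile_sub]
    exact ((hasDerivAt_gaussianSecondPrimitive ht _).comp_sub_const x a).sub
      ((hasDerivAt_gaussianSecondPrimitive ht _).comp_sub_const x b)
  have hint : IntervalIntegrable (fun x => ∫ y in a..b, gaussianProfile t (x - y)) volume b c := by
    simp only [integral_gaussianProfile_sub]
    exact Continuous.intervalIntegrable (by fun_prop) _ _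
  rw [integral_eq_sub_of_hasDerivAt hderiv hint]
  simp only [gaussianSecondPrimitive, sub_self, zero_mul, gaussianProfile_zero, mul_one, zero_add]
  ring_nf

theorem gaussianPrimitive_mono (t : ℝ) : Monotone (gaussianPrimitive t) := fun p q hpq => by
  rw [← sub_nonneg, gaussianPrimitive_sub_gaussianPrimitive]
  exact integral_nonneg hpq fun u _ => gaussianProfile_nonneg t u

theorem gaussianPrimitive_sub_le (ht : 0 ≤ t) {m p q : ℝ} (hm : 0 ≤ m) (hmp : m ≤ p)
    (hpq : p ≤ q) :
    gaussianPrimitive t q - gaussianPrimitive t p ≤ gaussianProfile t m * (q - p) :=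
  calc gaussianPrimitive t q - gaussianPrimitive t p
      = ∫ u in p..q, gaussianProfile t u := gaussianPrimitive_sub_gaussianPrimitive t p q
    _ ≤ ∫ _ in p..q, gaussianProfile t m :=
      integral_mono_on hpq ((continuous_gaussianProfile t).intervalIntegrable _ _)
        intervalIntegrable_const fun u hu => gaussianProfile_le_of_le ht hm (hmp.trans hu.1)
    _ = gaussianProfile t m * (q - p) := by
      rw [intervalIntegral.integral_const, smul_eq_mul, mul_comm]

theorem abs_gaussianSecondPrimitive_add_sub_le (ht : 0 ≤ t) {m d₁ d₂ : ℝ} (hm : 0 ≤ m)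
    (h₁ : m ≤ d₁) (h₂ : m ≤ d₂) :
    |gaussianSecondPrimitive t (d₁ + d₂) - gaussianSecondPrimitive t d₁
      - gaussianSecondPrimitive t d₂| ≤ gaussianProfile t m * (2 * d₁ * d₂ + 4 * t) := by
  have hd₁ : d₁ ≤ d₁ + d₂ := le_add_of_nonneg_right (hm.trans h₂)
  have hd₂ : d₂ ≤ d₁ + d₂ := le_add_of_nonneg_left (hm.trans h₁)
  have hΦ₁ := gaussianPrimitive_sub_le ht hm h₁ hd₁
  have hΦ₂ := gaussianPrimitive_sub_le ht hm h₂ hd₂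
  rw [add_sub_cancel_left] at hΦ₁
  rw [add_sub_cancel_right] at hΦ₂
  have hΦ₁' := sub_nonneg.2 (gaussianPrimitive_mono t hd₁)
  have hΦ₂' := sub_nonneg.2 (gaussianPrimitive_mono t hd₂)
  have he₁ := gaussianProfile_le_of_le ht hm h₁
  have he₂ := gaussianProfile_le_of_le ht hm h₂
  have he₃ := gaussianProfile_le_of_le ht hm (h₁.trans hd₁)
  have := gaussianProfile_nonneg t d₁
  have := gaussianProfile_nonneg t d₂
  have := gaussianProfile_nonneg t (d₁ + d₂)
  have hsplit : gaussianSecondPrimitive t (d₁ + d₂) - gaussianSecondPrimitive t d₁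
      - gaussianSecondPrimitive t d₂ =
        d₁ * (gaussianPrimitive t (d₁ + d₂) - gaussianPrimitive t d₁)
        + d₂ * (gaussianPrimitive t (d₁ + d₂) - gaussianPrimitive t d₂)
        + 2 * t * (gaussianProfile t (d₁ + d₂) - gaussianProfile t d₁ - gaussianProfile t d₂) := by
    unfold gaussianSecondPrimitive
    ring
  rw [hsplit, abs_le]
  constructor <;> nlinarith [mul_le_mul_of_nonneg_left hΦ₁ (hm.trans h₁),
    mul_le_mul_of_nonneg_left hΦ₂ (hm.trans h₂), mul_nonneg (hm.trans h₁) hΦ₁',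
    mul_nonneg (hm.trans h₂) hΦ₂']

theorem tendsto_inv_mul_gaussianProfile {m : ℝ} (hm : m ≠ 0) :
    Tendsto (fun t => t⁻¹ * gaussianProfile t m) (𝓝[>] 0) (𝓝 0) := by
  have h := (tendsto_rpow_mul_exp_neg_mul_atTop_nhds_zero 1 (m ^ 2 / 4) (by positivity)).comp
    tendsto_inv_nhdsGT_zero
  refine h.congr fun t => ?_
  simp only [Function.comp, rpow_one, gaussianProfile]
  congr 2
  ring

theorem tendsto_inv_mul_gaussianSecondPrimitive_add_sub {d₁ d₂ : ℝ} (h₁ : 0 < d₁)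
    (h₂ : 0 < d₂) :
    Tendsto (fun t => t⁻¹ * (gaussianSecondPrimitive t (d₁ + d₂) - gaussianSecondPrimitive t d₁
      - gaussianSecondPrimitive t d₂)) (𝓝[>] 0) (𝓝 0) := by
  set m := min d₁ d₂
  have hm : 0 < m := lt_min h₁ h₂
  have hbound : Tendsto (fun t => t⁻¹ * gaussianProfile t m * (2 * d₁ * d₂ + 4 * t)) (𝓝[>] 0)
      (𝓝 (0 * (2 * d₁ * d₂ + 4 * 0))) :=
    (tendsto_inv_mul_gaussianProfile hm.ne').mul
      ((continuous_const.add (continuous_const.mul continuous_id)).tendsto 0 |>.mono_left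
        nhdsWithin_le_nhds)
  rw [zero_mul] at hbound
  refine squeeze_zero_norm' ?_ hbound
  filter_upwards [self_mem_nhdsWithin] with t (ht : 0 < t)
  rw [norm_mul, norm_inv, norm_of_nonneg ht.le, mul_assoc]
  exact mul_le_mul_of_nonneg_left (abs_gaussianSecondPrimitive_add_sub_le ht.le hm.le
    (min_le_left _ _) (min_le_right _ _)) (inv_nonneg.2 ht.le)

end

theorem heatKernel_eq_mul_gaussianProfile (t x y : ℝ) :
    heatKernel t x y = (4 * π * t) ^ (-(1 : ℝ) / 2) * gaussianProfile t (x - y) := rfl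

theorem rpow_neg_half_mul_rpow_neg_half_mul {c t : ℝ} (hc : 0 ≤ c) (ht : 0 < t) :
    t ^ (-(1 : ℝ) / 2) * (c * t) ^ (-(1 : ℝ) / 2) = (√c)⁻¹ * t⁻¹ := by
  rw [mul_rpow hc ht.le, mul_left_comm, ← rpow_add ht, show -(1 : ℝ) / 2 = -(1 / 2) by ring,
    rpow_neg hc, ← sqrt_eq_rpow]
  norm_num [rpow_neg_one]

/-- Bilinear limit formula for the adjacent intervals `E = (a,b)`, `F = (b,c)`. -/
theorem stmt_6 (a b c : ℝ) (hab : a < b) (hbc : b < c) :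
    Tendsto (fun t : ℝ => t ^ (-(1 : ℝ) / 2) *
        ∫ x in b..c, ∫ y in a..b, heatKernel t x y)
      (nhdsWithin 0 (Set.Ioi 0)) (nhds (1 / Real.sqrt Real.pi)) := by
  have hlim := ((tendsto_inv_mul_gaussianSecondPrimitive_add_sub (sub_pos.2 hab)
    (sub_pos.2 hbc)).const_add 2).const_mul (√(4 * π))⁻¹
  have hconst : (√(4 * π))⁻¹ * (2 + 0) = 1 / √π := by
    rw [add_zero, sqrt_mul zero_le_four, show (4 : ℝ) = 2 ^ 2 by norm_num, sqrt_sq zero_le_two]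
    field_simp
  rw [hconst] at hlim
  refine hlim.congr' ?_
  filter_upwards [self_mem_nhdsWithin] with t (ht : 0 < t)
  simp only [heatKernel_eq_mul_gaussianProfile, intervalIntegral.integral_const_mul]
  rw [integral_integral_gaussianProfile_sub ht.ne', ← mul_assoc,
    rpow_neg_half_mul_rpow_neg_half_mul (by positivity) ht]
  field_simp
end
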